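/- arXiv:1903.01326 — 7 statements merged into one kernel-verified Lean document; each statement's English description precedes it below -/
import Mathlib

section
/- Let R be an n×n real symmetric matrix with nonnegative entries, R ≠ 0, and let κ = η(R) be its nullity. Then E(R) ≥ sqrt( |R|² + (n−κ)(n−κ−1)·|Υ_{n−κ}(R)|^{2/(n−κ)} ). -/
open Finset

/-- The energy of a Hermitian (real symmetric) matrix: the sum of the absolute
values of its eigenvalues. -/
noncomputable def Matrix.energy {n : ℕ} (R : Matrix (Fin n) (Fin n) ℝ)
    (hR : R.IsHermitian) : ℝ :=
  ∑ i, |hR.eigenvalues i|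

/-- The nullity of a Hermitian (real symmetric) matrix: the multiplicity of `0`
as an eigenvalue. -/
noncomputable def Matrix.nullityEig {n : ℕ} (R : Matrix (Fin n) (Fin n) ℝ)
    (hR : R.IsHermitian) : ℕ :=
  (Finset.univ.filter fun i => hR.eigenvalues i = 0).card

/-- `Υ_{n-κ}(R)`: the product of the nonzero eigenvalues of `R`, i.e. the
`(n-κ)`-th elementary symmetric function of the eigenvalues when `κ` is the
nullity. -/
noncomputable def Matrix.prodNonzeroEig {n : ℕ} (R : Matrix (Fin n) (Fin n) ℝ)
    (hR : R.IsHermitian) : ℝ :=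
  ∏ i ∈ Finset.univ.filter (fun i => hR.eigenvalues i ≠ 0), hR.eigenvalues i


/-!
Squaring, `E(R)² = ∑ λᵢ² + ∑_{i ≠ j} |λᵢ| |λⱼ|`. Keep only the `m (m - 1)` ordered pairs of
nonzero eigenvalues, `m = n - κ`: every `|λᵢ|` occurs in `2 (m - 1)` of them, so their product is
`|Υ_m(R)|^{2 (m - 1)}`, and AM-GM bounds their sum below by `m (m - 1) |Υ_m(R)|^{2/m}`.
-/

namespace Finset

variable {α M : Type*} [DecidableEq α]

theorem prod_offDiag_fst [CommMonoid M] (s : Finset α) (f : α → M) :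
    ∏ p ∈ s.offDiag, f p.1 = ∏ i ∈ s, f i ^ (#s - 1) := by
  rw [prod_finset_product _ s (fun i => s.erase i) fun p => by
    rw [mem_offDiag, mem_erase]; tauto]
  exact prod_congr rfl fun i hi => by rw [← card_erase_of_mem hi]; exact prod_const (f i)

theorem prod_offDiag_snd [CommMonoid M] (s : Finset α) (f : α → M) :
    ∏ p ∈ s.offDiag, f p.2 = ∏ i ∈ s, f i ^ (#s - 1) := by
  rw [prod_finset_product_right _ s (fun i => s.erase i) fun p => by
    rw [mem_offDiag, mem_erase]; tauto]
  exact prod_congr rfl fun i hi => by rw [← card_erase_of_mem hi]; exact prod_const (f i)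

theorem prod_offDiag_mul [CommMonoid M] (s : Finset α) (f : α → M) :
    ∏ p ∈ s.offDiag, f p.1 * f p.2 = (∏ i ∈ s, f i) ^ (2 * (#s - 1)) := by
  rw [prod_mul_distrib, prod_offDiag_fst, prod_offDiag_snd, prod_pow, two_mul, pow_add]

theorem sq_sum_eq_sum_sq_add_sum_offDiag [CommSemiring M] (s : Finset α) (f : α → M) :
    (∑ i ∈ s, f i) ^ 2 = ∑ i ∈ s, f i ^ 2 + ∑ p ∈ s.offDiag, f p.1 * f p.2 := by
  rw [sq, sum_mul_sum, ← sum_product', ← diag_union_offDiag,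
    sum_union (disjoint_diag_offDiag s), sum_diag]
  simp only [sq]

theorem card_mul_card_sub_one_mul_prod_rpow_le_sum_offDiag (s : Finset α) {a : α → ℝ}
    (ha : ∀ i ∈ s, 0 ≤ a i) :
    (#s : ℝ) * (#s - 1) * (∏ i ∈ s, a i) ^ ((2 : ℝ) / #s) ≤
      ∑ p ∈ s.offDiag, a p.1 * a p.2 := by
  have hpair : ∀ p ∈ s.offDiag, 0 ≤ a p.1 * a p.2 := fun p hp => by
    obtain ⟨h1, h2, -⟩ := mem_offDiag.mp hp
    exact mul_nonneg (ha _ h1) (ha _ h2)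
  rcases le_or_gt #s 1 with hs | hs
  · interval_cases h : #s <;> simpa using sum_nonneg hpair
  have hs' : (2 : ℝ) ≤ #s := by exact_mod_cast hs
  have hN : (#s.offDiag : ℝ) = #s * (#s - 1) := by
    rw [offDiag_card, Nat.cast_sub (Nat.le_mul_self _), Nat.cast_mul]
    ring
  have hN_pos : (0 : ℝ) < #s * (#s - 1) := by nlinarith
  have amgm := Real.geom_mean_le_arith_mean s.offDiag (fun _ => 1) (fun p => a p.1 * a p.2)
    (fun _ _ => zero_le_one) (by simpa using hs) hpair
  simp only [Real.rpow_one, one_mul, sum_const, nsmul_eq_mul, mul_one] at amgm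
  rw [prod_offDiag_mul, ← Real.rpow_natCast, ← Real.rpow_mul (prod_nonneg ha), hN] at amgm
  have hexp : ((2 * (#s - 1) : ℕ) : ℝ) * ((#s : ℝ) * (#s - 1))⁻¹ = 2 / #s := by
    have : (#s : ℝ) - 1 ≠ 0 := by linarith
    rw [Nat.cast_mul, Nat.cast_sub (by omega)]
    field_simp
    push_cast
    ring
  rw [hexp, le_div_iff₀ hN_pos] at amgm
  linarith

end Finset

namespace Matrix

variable {n : ℕ} {R : Matrix (Fin n) (Fin n) ℝ}

theorem nullityEig_add_card_eigenvalues_ne_zero (hR : R.IsHermitian) :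
    R.nullityEig hR + #{i | hR.eigenvalues i ≠ 0} = n := by
  rw [nullityEig, card_filter_add_card_filter_not, card_univ, Fintype.card_fin]

theorem energy_sq (hR : R.IsHermitian) :
    R.energy hR ^ 2 = ∑ i, hR.eigenvalues i ^ 2 +
      ∑ p ∈ univ.offDiag, |hR.eigenvalues p.1| * |hR.eigenvalues p.2| := by
  simp only [energy, sq_sum_eq_sum_sq_add_sum_offDiag, sq_abs]

end Matrix

theorem energy_lower_bound_mcclelland_general {n : ℕ} (R : Matrix (Fin n) (Fin n) ℝ)
    (hR : R.IsHermitian)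
    (κ : ℕ) (hκ : κ = R.nullityEig hR) :
    R.energy hR ≥
      Real.sqrt ((∑ i, (hR.eigenvalues i) ^ 2) +
        ((n : ℝ) - κ) * ((n : ℝ) - κ - 1) *
          |R.prodNonzeroEig hR| ^ ((2 : ℝ) / ((n : ℝ) - κ))) := by
  set S : Finset (Fin n) := {i | hR.eigenvalues i ≠ 0}
  have hS : (n : ℝ) - κ = #S := by
    rw [hκ, sub_eq_iff_eq_add']
    exact_mod_cast (R.nullityEig_add_card_eigenvalues_ne_zero hR).symm
  have hP : |R.prodNonzeroEig hR| = ∏ i ∈ S, |hR.eigenvalues i| := abs_prod _ _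
  rw [hS, hP, ge_iff_le, Real.sqrt_le_iff]
  refine ⟨sum_nonneg fun i _ => abs_nonneg _, ?_⟩
  calc _ ≤ ∑ i, hR.eigenvalues i ^ 2 +
          ∑ p ∈ S.offDiag, |hR.eigenvalues p.1| * |hR.eigenvalues p.2| := by
        gcongr
        exact card_mul_card_sub_one_mul_prod_rpow_le_sum_offDiag S fun i _ => abs_nonneg _
    _ ≤ ∑ i, hR.eigenvalues i ^ 2 +
          ∑ p ∈ univ.offDiag, |hR.eigenvalues p.1| * |hR.eigenvalues p.2| := by
        gcongr
        exact subset_univ S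
    _ = R.energy hR ^ 2 := (R.energy_sq hR).symm

theorem energy_lower_bound_mcclelland {n : ℕ} (R : Matrix (Fin n) (Fin n) ℝ)
    (hR : R.IsHermitian) (hnonneg : ∀ i j, 0 ≤ R i j) (hR0 : R ≠ 0)
    (κ : ℕ) (hκ : κ = R.nullityEig hR) :
    R.energy hR ≥
      Real.sqrt ((∑ i, (hR.eigenvalues i) ^ 2) +
        ((n : ℝ) - κ) * ((n : ℝ) - κ - 1) *
          |R.prodNonzeroEig hR| ^ ((2 : ℝ) / ((n : ℝ) - κ))) :=
  energy_lower_bound_mcclelland_general R hR κ hκ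
end

section
/- Let R be a nonzero n×n real symmetric matrix with nonnegative entries, with spectral radius ρ (its largest eigenvalue) and nullity κ = η(R). Then E(R) = ρ + (n − κ − 1) + ln|Υ_{n−κ}(R)| − ln ρ holds if and only if, after removing one occurrence of ρ from the list of eigenvalues, every remaining nonzero eigenvalue of R has absolute value 1. -/
open Finset

/-! Splitting off the eigenvalue `ρ = μ i₀ > 0`, the energy minus the bound is
`∑ (|μ i| - 1 - log |μ i|)` over the remaining nonzero eigenvalues. Since `log x ≤ x - 1` with
equality only at `x = 1`, every term is nonnegative and the sum vanishes exactly when all these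
`|μ i|` equal `1`. That `ρ > 0` follows from `tr R ≥ 0` and `R ≠ 0`. -/

namespace Real

theorem sub_one_sub_log_nonneg {x : ℝ} (hx : 0 < x) : 0 ≤ x - 1 - log x := by
  linarith [log_le_sub_one_of_pos hx]

theorem sub_one_sub_log_eq_zero_iff {x : ℝ} (hx : 0 < x) : x - 1 - log x = 0 ↔ x = 1 := by
  refine ⟨fun h => ?_, fun h => by simp [h]⟩
  by_contra hne
  linarith [log_lt_sub_one_of_pos hx hne]

end Real

theorem Finset.sum_sub_one_sub_log_eq_zero_iff {ι : Type*} {s : Finset ι} {f : ι → ℝ}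
    (hf : ∀ i ∈ s, 0 < f i) :
    ∑ i ∈ s, (f i - 1 - Real.log (f i)) = 0 ↔ ∀ i ∈ s, f i = 1 := by
  rw [sum_eq_zero_iff_of_nonneg fun i hi => Real.sub_one_sub_log_nonneg (hf i hi)]
  exact forall₂_congr fun i hi => Real.sub_one_sub_log_eq_zero_iff (hf i hi)

section Spectrum

variable {ι : Type*} [Fintype ι] [DecidableEq ι]

theorem sum_abs_sub_add_card_add_log_prod_eq (μ : ι → ℝ) {i₀ : ι} (hi₀ : 0 < μ i₀) :
    ∑ i, |μ i| - (μ i₀ + ((#{i | μ i ≠ 0} : ℝ) - 1) + Real.log |∏ i with μ i ≠ 0, μ i|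
        - Real.log (μ i₀)) =
      ∑ i ∈ ({i | μ i ≠ 0} : Finset ι).erase i₀, (|μ i| - 1 - Real.log |μ i|) := by
  set S : Finset ι := {i | μ i ≠ 0}
  have hi₀S : i₀ ∈ S := mem_filter.2 ⟨mem_univ _, hi₀.ne'⟩
  have hsum : ∑ i, |μ i| = μ i₀ + ∑ i ∈ S.erase i₀, |μ i| := by
    rw [← sum_filter_of_ne (p := fun i => μ i ≠ 0) fun i _ hi h => hi (by simp [h]),
      ← add_sum_erase _ _ hi₀S, abs_of_pos hi₀]
  have hlog : Real.log |∏ i ∈ S, μ i| = Real.log (μ i₀) + ∑ i ∈ S.erase i₀, Real.log |μ i| := by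
    rw [abs_prod, Real.log_prod fun i hi => abs_ne_zero.2 (mem_filter.1 hi).2,
      ← add_sum_erase _ _ hi₀S, abs_of_pos hi₀]
  have hcard : ((S.erase i₀).card : ℝ) = S.card - 1 := by
    rw [card_erase_of_mem hi₀S, Nat.cast_pred (card_pos.2 ⟨i₀, hi₀S⟩)]
  rw [hsum, hlog, ← hcard, sum_sub_distrib, sum_sub_distrib, sum_const, nsmul_one]
  ring

theorem sum_abs_eq_add_card_add_log_prod_iff (μ : ι → ℝ) {i₀ : ι} (hi₀ : 0 < μ i₀) :
    ∑ i, |μ i| = μ i₀ + ((#{i | μ i ≠ 0} : ℝ) - 1) + Real.log |∏ i with μ i ≠ 0, μ i|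
        - Real.log (μ i₀) ↔
      ∀ i, i ≠ i₀ → μ i ≠ 0 → |μ i| = 1 := by
  rw [← sub_eq_zero, sum_abs_sub_add_card_add_log_prod_eq μ hi₀,
    sum_sub_one_sub_log_eq_zero_iff fun i hi => abs_pos.2 (mem_filter.1 (mem_of_mem_erase hi)).2]
  simp only [mem_erase, mem_filter, mem_univ, true_and, and_imp]

end Spectrum

theorem Matrix.IsHermitian.pos_of_isGreatest_eigenvalues {n : Type*} [Fintype n]
    [DecidableEq n] {A : Matrix n n ℝ} (hA : A.IsHermitian) (htr : 0 ≤ A.trace) (hA0 : A ≠ 0)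
    {ρ : ℝ} (hρ : IsGreatest (Set.range hA.eigenvalues) ρ) : 0 < ρ := by
  by_contra! hρ0
  have hle : ∀ i ∈ univ, hA.eigenvalues i ≤ 0 := fun i _ => (hρ.2 ⟨i, rfl⟩).trans hρ0
  have hsum : ∑ i, hA.eigenvalues i = 0 :=
    le_antisymm (sum_nonpos hle) (by simpa [hA.trace_eq_sum_eigenvalues] using htr)
  exact hA0 <| hA.eigenvalues_eq_zero_iff.1 <|
    funext fun i => (sum_eq_zero_iff_of_nonpos hle).1 hsum i (mem_univ i)

theorem Matrix.card_eigenvalues_ne_zero_add_nullityEig {n : ℕ} (R : Matrix (Fin n) (Fin n) ℝ)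
    (hR : R.IsHermitian) : #{i | hR.eigenvalues i ≠ 0} + R.nullityEig hR = n := by
  simpa [nullityEig] using
    card_filter_add_card_filter_not (s := univ) (p := fun i => hR.eigenvalues i ≠ 0)

theorem energy_eq_das_mojallal_gutman_bound_iff {n : ℕ}
    (R : Matrix (Fin n) (Fin n) ℝ) (hR : R.IsHermitian)
    (hnonneg : ∀ i j, 0 ≤ R i j) (hR0 : R ≠ 0)
    (ρ : ℝ) (hρ : IsGreatest (Set.range hR.eigenvalues) ρ)
    (κ : ℕ) (hκ : κ = R.nullityEig hR) :
    R.energy hR =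
      ρ + ((n : ℝ) - κ - 1) + Real.log |R.prodNonzeroEig hR| - Real.log ρ ↔
    ∃ i₀, hR.eigenvalues i₀ = ρ ∧
      ∀ i, i ≠ i₀ → hR.eigenvalues i ≠ 0 → |hR.eigenvalues i| = 1 := by
  have hρpos : 0 < ρ :=
    hR.pos_of_isGreatest_eigenvalues (sum_nonneg fun i _ => hnonneg i i) hR0 hρ
  have hcard : (n : ℝ) - κ = #{i | hR.eigenvalues i ≠ 0} := by
    subst hκ
    have h := congrArg (Nat.cast : ℕ → ℝ) (R.card_eigenvalues_ne_zero_add_nullityEig hR)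
    push_cast at h
    linarith
  have key : ∀ i₀, hR.eigenvalues i₀ = ρ → (R.energy hR =
      ρ + ((n : ℝ) - κ - 1) + Real.log |R.prodNonzeroEig hR| - Real.log ρ ↔
      ∀ i, i ≠ i₀ → hR.eigenvalues i ≠ 0 → |hR.eigenvalues i| = 1) := by
    rintro i₀ rfl
    rw [hcard]
    exact sum_abs_eq_add_card_add_log_prod_iff hR.eigenvalues hρpos
  obtain ⟨i₀, hi₀⟩ := hρ.1
  exact ⟨fun h => ⟨i₀, hi₀, (key i₀ hi₀).1 h⟩, fun ⟨i₁, hi₁, h⟩ => (key i₁ hi₁).2 h⟩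
end

section
/- Let R be a nonzero n×n real symmetric matrix with nonnegative entries, with spectral radius ρ (its largest eigenvalue) and nullity κ = η(R). Suppose there exist three distinct indices i, j, k such that R has zero diagonal entries at i, j, k, R[i,k] = 0, and, setting a = R[i,j] and b = R[j,k], one has a² + b² > 1. Then the inequality is strict: E(R) > ρ + (n − κ − 1) + ln|Υ_{n−κ}(R)| − ln ρ. -/
/-!
On the path `i – j – k` the vector `(a, -√(a² + b²), b)` has Rayleigh quotient `-√(a² + b²) < -1`,
so `R` has an eigenvalue `λ < -1`; since the trace of `R` is nonnegative, `ρ > 0` as well.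
Writing `E - ln |Υ| = (n - κ) + ∑ (|μ| - 1 - ln |μ|)` over the nonzero eigenvalues `μ`, every
summand is nonnegative because `ln t ≤ t - 1`, and the one at `λ` is positive because `|λ| ≠ 1`;
dropping all summands except those at `ρ` and `λ` gives the strict bound.
-/

open Finset

theorem Real.abs_sub_one_sub_log_abs_lt_sum {ι : Type*} [DecidableEq ι] {S : Finset ι}
    {f : ι → ℝ} (hf : ∀ p ∈ S, f p ≠ 0) {i m : ι} (hi : i ∈ S) (hm : m ∈ S) (hmi : m ≠ i)
    (hm1 : |f m| ≠ 1) :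
    |f i| - 1 - log |f i| < ∑ p ∈ S, (|f p| - 1 - log |f p|) := by
  have hnonneg : ∀ p ∈ S, 0 ≤ |f p| - 1 - log |f p| := fun p hp => by
    linarith [log_le_sub_one_of_pos (abs_pos.mpr (hf p hp))]
  have hpos : 0 < |f m| - 1 - log |f m| := by
    linarith [log_lt_sub_one_of_pos (abs_pos.mpr (hf m hm)) hm1]
  calc |f i| - 1 - log |f i|
      < ∑ p ∈ {i, m}, (|f p| - 1 - log |f p|) := by
        rw [sum_pair hmi.symm]; linarith
    _ ≤ ∑ p ∈ S, (|f p| - 1 - log |f p|) :=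
        sum_le_sum_of_subset_of_nonneg (insert_subset hi (singleton_subset_iff.mpr hm))
          fun p hp _ => hnonneg p hp

namespace Matrix.IsHermitian

variable {ι : Type*} [Fintype ι] [DecidableEq ι] {A : Matrix ι ι ℝ} (hA : A.IsHermitian)

open MatrixOrder in
theorem mul_dotProduct_le_of_le_eigenvalues {c : ℝ}
    (hc : ∀ p, c ≤ hA.eigenvalues p) (v : ι → ℝ) :
    c * (v ⬝ᵥ v) ≤ v ⬝ᵥ (A *ᵥ v) := by
  have hle : algebraMap ℝ _ c ≤ A := algebraMap_le_of_le_spectrum (by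
    rintro x hx
    rw [hA.spectrum_real_eq_range_eigenvalues] at hx
    obtain ⟨p, rfl⟩ := hx
    exact hc p) hA.isSelfAdjoint
  simpa [sub_mulVec, Algebra.algebraMap_eq_smul_one, smul_mulVec, dotProduct_smul] using
    (le_iff.mp hle).dotProduct_mulVec_nonneg v

theorem exists_eigenvalue_le_of_dotProduct_mulVec_le {v : ι → ℝ} (hv : v ≠ 0) {c : ℝ}
    (hvc : v ⬝ᵥ (A *ᵥ v) ≤ c * (v ⬝ᵥ v)) : ∃ p, hA.eigenvalues p ≤ c := by
  have : Nonempty ι := by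
    by_contra h
    exact hv (funext fun p => (not_nonempty_iff.mp h).elim p)
  obtain ⟨m, -, hm⟩ := exists_min_image univ hA.eigenvalues univ_nonempty
  have hvv : 0 < v ⬝ᵥ v := by simpa using dotProduct_star_self_pos_iff.mpr hv
  have := hA.mul_dotProduct_le_of_le_eigenvalues (fun p => hm p (mem_univ p)) v
  exact ⟨m, le_of_mul_le_mul_right (this.trans hvc) hvv⟩

theorem exists_eigenvalues_pos_of_trace_nonneg (htr : 0 ≤ A.trace) {m : ι}
    (hm : hA.eigenvalues m < 0) : ∃ p, 0 < hA.eigenvalues p := by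
  by_contra! hle
  have htr_eq : A.trace = ∑ p, hA.eigenvalues p := by simpa using hA.trace_eq_sum_eigenvalues
  have hsum : ∑ p, hA.eigenvalues p < ∑ _p : ι, 0 :=
    sum_lt_sum (fun p _ => hle p) ⟨m, mem_univ m, hm⟩
  rw [sum_const_zero, ← htr_eq] at hsum
  linarith

theorem exists_eigenvalue_le_neg_sqrt_of_path {i j k : ι} (hij : i ≠ j) (hjk : j ≠ k)
    (hik : i ≠ k) (hii : A i i = 0) (hjj : A j j = 0) (hkk : A k k = 0) (hik0 : A i k = 0)
    (hpos : 0 < A i j ^ 2 + A j k ^ 2) :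
    ∃ p, hA.eigenvalues p ≤ -√(A i j ^ 2 + A j k ^ 2) := by
  set s := √(A i j ^ 2 + A j k ^ 2)
  have hs : s ^ 2 = A i j ^ 2 + A j k ^ 2 := Real.sq_sqrt hpos.le
  have hsym : ∀ p q, A q p = A p q := fun p q => by simpa using hA.apply p q
  set v : ι → ℝ := Pi.single i (A i j) + Pi.single j (-s) + Pi.single k (A j k)
  have hv : v ⬝ᵥ v = 2 * s ^ 2 := by
    simp only [v, dotProduct_add, dotProduct_single, Pi.add_apply, Pi.single_eq_same, ne_eq,
      not_false_eq_true, Pi.single_eq_of_ne, hij, hjk, hik, hij.symm, hjk.symm, hik.symm,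
      add_zero, zero_add]
    linear_combination -hs
  have hvAv : v ⬝ᵥ (A *ᵥ v) = -s * (v ⬝ᵥ v) := by
    rw [hv]
    simp only [v, mulVec_add, mulVec_single, dotProduct_add, add_dotProduct, single_dotProduct,
      dotProduct_smul, dotProduct_neg, op_smul_eq_smul, MulOpposite.op_neg, neg_smul, smul_eq_mul,
      col_apply, hii, hjj, hkk, hik0, hsym i j, hsym j k, hsym i k, mul_zero, zero_add, add_zero]
    linear_combination (2 * s) * hs
  refine hA.exists_eigenvalue_le_of_dotProduct_mulVec_le (v := v) ?_ hvAv.le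
  intro h0
  have hv0 : v ⬝ᵥ v = 0 := by rw [h0, zero_dotProduct]
  have hs0 : 0 < s := Real.sqrt_pos.mpr hpos
  nlinarith

end Matrix.IsHermitian

namespace Matrix

variable {n : ℕ} (R : Matrix (Fin n) (Fin n) ℝ) (hR : R.IsHermitian)

theorem energy_eq_sum_filter_eigenvalues_ne_zero :
    R.energy hR = ∑ p ∈ univ.filter (hR.eigenvalues · ≠ 0), |hR.eigenvalues p| :=
  (sum_filter_of_ne (p := (hR.eigenvalues · ≠ 0)) fun _ _ h h0 => h (by rw [h0, abs_zero])).symm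

theorem log_abs_prodNonzeroEig :
    Real.log |R.prodNonzeroEig hR| =
      ∑ p ∈ univ.filter (hR.eigenvalues · ≠ 0), Real.log |hR.eigenvalues p| := by
  rw [prodNonzeroEig, abs_prod,
    Real.log_prod fun p hp => abs_ne_zero.mpr (mem_filter.mp hp).2]

theorem card_filter_eigenvalues_ne_zero_add_nullityEig :
    #(univ.filter (hR.eigenvalues · ≠ 0)) + R.nullityEig hR = n := by
  rw [nullityEig, add_comm, card_filter_add_card_filter_not, card_univ, Fintype.card_fin]

theorem energy_sub_log_abs_prodNonzeroEig :
    R.energy hR - Real.log |R.prodNonzeroEig hR| =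
      ((n : ℝ) - R.nullityEig hR) + ∑ p ∈ univ.filter (hR.eigenvalues · ≠ 0),
        (|hR.eigenvalues p| - 1 - Real.log |hR.eigenvalues p|) := by
  have hcard := congrArg (Nat.cast : ℕ → ℝ) (R.card_filter_eigenvalues_ne_zero_add_nullityEig hR)
  push_cast at hcard
  rw [energy_eq_sum_filter_eigenvalues_ne_zero, log_abs_prodNonzeroEig, sum_sub_distrib,
    sum_sub_distrib, sum_const, nsmul_one]
  linarith

end Matrix

theorem energy_strict_lower_bound_of_path_submatrix_general {n : ℕ}
    (R : Matrix (Fin n) (Fin n) ℝ) (hR : R.IsHermitian)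
    (hnonneg : ∀ i j, 0 ≤ R i j)
    (ρ : ℝ) (hρ : IsGreatest (Set.range hR.eigenvalues) ρ)
    (κ : ℕ) (hκ : κ = R.nullityEig hR)
    (i j k : Fin n) (hij : i ≠ j) (hjk : j ≠ k) (hik : i ≠ k)
    (hii : R i i = 0) (hjj : R j j = 0) (hkk : R k k = 0)
    (hik0 : R i k = 0)
    (hab : (R i j) ^ 2 + (R j k) ^ 2 > 1) :
    R.energy hR >
      ρ + ((n : ℝ) - κ - 1) + Real.log |R.prodNonzeroEig hR| - Real.log ρ := by
  obtain ⟨m, hm⟩ :=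
    hR.exists_eigenvalue_le_neg_sqrt_of_path hij hjk hik hii hjj hkk hik0 (by linarith)
  have hmneg : hR.eigenvalues m < -1 := by
    have : 1 < √(R i j ^ 2 + R j k ^ 2) := Real.lt_sqrt zero_le_one |>.mpr (by simpa using hab)
    linarith
  have hm1 : 1 < |hR.eigenvalues m| := by rw [abs_of_neg (by linarith)]; linarith
  have hρpos : 0 < ρ := by
    obtain ⟨p, hp⟩ := hR.exists_eigenvalues_pos_of_trace_nonneg
      (sum_nonneg fun p _ => hnonneg p p) (hmneg.trans neg_one_lt_zero)
    exact hp.trans_le (hρ.2 ⟨p, rfl⟩)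
  obtain ⟨i₀, hi₀⟩ := hρ.1
  have hmi₀ : m ≠ i₀ := by rintro rfl; linarith
  have hgap := Real.abs_sub_one_sub_log_abs_lt_sum (fun p hp => (mem_filter.mp hp).2)
    (mem_filter.mpr ⟨mem_univ i₀, hi₀ ▸ hρpos.ne'⟩)
    (mem_filter.mpr ⟨mem_univ m, abs_pos.mp (one_pos.trans hm1)⟩) hmi₀ hm1.ne'
  rw [hi₀, abs_of_pos hρpos] at hgap
  have := R.energy_sub_log_abs_prodNonzeroEig hR
  subst hκ
  linarith

theorem energy_strict_lower_bound_of_path_submatrix {n : ℕ}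
    (R : Matrix (Fin n) (Fin n) ℝ) (hR : R.IsHermitian)
    (hnonneg : ∀ i j, 0 ≤ R i j) (hR0 : R ≠ 0)
    (ρ : ℝ) (hρ : IsGreatest (Set.range hR.eigenvalues) ρ)
    (κ : ℕ) (hκ : κ = R.nullityEig hR)
    (i j k : Fin n) (hij : i ≠ j) (hjk : j ≠ k) (hik : i ≠ k)
    (hii : R i i = 0) (hjj : R j j = 0) (hkk : R k k = 0)
    (hik0 : R i k = 0)
    (hab : (R i j) ^ 2 + (R j k) ^ 2 > 1) :
    R.energy hR >
      ρ + ((n : ℝ) - κ - 1) + Real.log |R.prodNonzeroEig hR| - Real.log ρ :=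
  energy_strict_lower_bound_of_path_submatrix_general R hR hnonneg ρ hρ κ hκ i j k hij hjk hik hii
    hjj hkk hik0 hab
end

section
/- Let G be a finite simple graph with n vertices having at least one edge, with largest eigenvalue λ1 and nullity κ = η(G). Then E(G) ≥ λ1 + (n − κ − 1) + ln|Υ_{n−κ}(G)| − ln λ1. -/
open Finset

/-- The adjacency matrix of a simple graph, as a real matrix, is Hermitian. -/
lemma SimpleGraph.adjMatrix_isHermitian {V : Type*} [Fintype V]
    (G : SimpleGraph V) [DecidableRel G.Adj] : (G.adjMatrix ℝ).IsHermitian := by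
  unfold Matrix.IsHermitian
  ext i j
  simp [Matrix.conjTranspose_apply, SimpleGraph.adj_comm]

/-- The energy of a graph: the sum of the absolute values of the eigenvalues of
its adjacency matrix. -/
noncomputable def SimpleGraph.energy {n : ℕ} (G : SimpleGraph (Fin n))
    [DecidableRel G.Adj] : ℝ :=
  ∑ i, |(G.adjMatrix_isHermitian).eigenvalues i|

/-- The nullity of a graph: the multiplicity of `0` as an eigenvalue of its
adjacency matrix. -/
noncomputable def SimpleGraph.nullity {n : ℕ} (G : SimpleGraph (Fin n))
    [DecidableRel G.Adj] : ℕ :=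
  (Finset.univ.filter fun i => (G.adjMatrix_isHermitian).eigenvalues i = 0).card

/-- `Υ_{n-κ}(G)`: the product of the nonzero eigenvalues of `G`, i.e. the
`(n-κ)`-th elementary symmetric function of the eigenvalues when `κ` is the
nullity of `G`. -/
noncomputable def SimpleGraph.prodNonzeroEig {n : ℕ} (G : SimpleGraph (Fin n))
    [DecidableRel G.Adj] : ℝ :=
  ∏ i ∈ Finset.univ.filter
      (fun i => (G.adjMatrix_isHermitian).eigenvalues i ≠ 0),
    (G.adjMatrix_isHermitian).eigenvalues i

/-! For `x ≠ 0` we have `1 + log |x| ≤ |x|`. Summing this over the nonzero eigenvalues other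
than `λ₁` and adding `|λ₁|` to both sides bounds the energy from below; the logarithms on the left
add up to `log |Υ_{n-κ}| - log λ₁`, and there are `n - κ - 1` ones. -/

namespace Real

theorem one_add_log_abs_le_abs {x : ℝ} (hx : x ≠ 0) : 1 + log |x| ≤ |x| := by
  linarith [log_le_sub_one_of_pos (abs_pos.mpr hx)]

variable {ι : Type*}

theorem card_add_log_abs_prod_le_sum_abs {s : Finset ι} {μ : ι → ℝ}
    (hμ : ∀ i ∈ s, μ i ≠ 0) : #s + log |∏ i ∈ s, μ i| ≤ ∑ i ∈ s, |μ i| := by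
  have hlog : log |∏ i ∈ s, μ i| = ∑ i ∈ s, log |μ i| := by
    rw [abs_prod, log_prod fun i hi => abs_ne_zero.mpr (hμ i hi)]
  calc (#s : ℝ) + log |∏ i ∈ s, μ i| = ∑ i ∈ s, (1 + log |μ i|) := by
        rw [hlog, sum_add_distrib, sum_const, nsmul_one]
    _ ≤ ∑ i ∈ s, |μ i| := sum_le_sum fun i hi => one_add_log_abs_le_abs (hμ i hi)

theorem add_card_nonzero_add_log_abs_prod_sub_log_le_sum_abs [Fintype ι] [DecidableEq ι]
    (μ : ι → ℝ) (j : ι) :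
    μ j + ((#{i | μ i ≠ 0} : ℝ) - 1) + log |∏ i ∈ {i | μ i ≠ 0}, μ i| - log (μ j) ≤
      ∑ i, |μ i| := by
  set S : Finset ι := {i | μ i ≠ 0}
  have hS : ∀ i ∈ S, μ i ≠ 0 := fun i hi => (mem_filter.mp hi).2
  have hsub : ∑ i ∈ S, |μ i| ≤ ∑ i, |μ i| :=
    sum_le_sum_of_subset_of_nonneg (subset_univ S) fun i _ _ => abs_nonneg (μ i)
  by_cases hj : μ j = 0
  · have := card_add_log_abs_prod_le_sum_abs hS
    rw [hj, log_zero]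
    linarith
  · have hjS : j ∈ S := mem_filter.mpr ⟨mem_univ j, hj⟩
    have herase := card_add_log_abs_prod_le_sum_abs (s := S.erase j) fun i hi =>
      hS i (mem_of_mem_erase hi)
    have hprod : ∏ i ∈ S, μ i = μ j * ∏ i ∈ S.erase j, μ i := (mul_prod_erase S μ hjS).symm
    have hlog : log |∏ i ∈ S, μ i| = log |μ j| + log |∏ i ∈ S.erase j, μ i| := by
      rw [hprod, abs_mul, log_mul (abs_ne_zero.mpr hj)
        (abs_ne_zero.mpr (prod_ne_zero_iff.mpr fun i hi => hS i (mem_of_mem_erase hi)))]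
    have hsum : ∑ i ∈ S, |μ i| = |μ j| + ∑ i ∈ S.erase j, |μ i| := (add_sum_erase S _ hjS).symm
    have hcard : (#(S.erase j) : ℝ) = #S - 1 := by
      rw [card_erase_of_mem hjS, Nat.cast_pred (card_pos.mpr ⟨j, hjS⟩)]
    rw [← log_abs (μ j)]
    linarith [le_abs_self (μ j)]

end Real

theorem SimpleGraph.nullity_add_card_nonzero_eigenvalues {n : ℕ} (G : SimpleGraph (Fin n))
    [DecidableRel G.Adj] : G.nullity + #{i | G.adjMatrix_isHermitian.eigenvalues i ≠ 0} = n := by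
  rw [nullity, card_filter_add_card_filter_not, card_univ, Fintype.card_fin]

theorem graph_energy_lower_bound_das_mojallal_gutman_general {n : ℕ}
    (G : SimpleGraph (Fin n)) [DecidableRel G.Adj]
    (lam1 : ℝ) (hlam1 : IsGreatest (Set.range (G.adjMatrix_isHermitian).eigenvalues) lam1)
    (κ : ℕ) (hκ : κ = G.nullity) :
    G.energy ≥
      lam1 + ((n : ℝ) - κ - 1) + Real.log |G.prodNonzeroEig| - Real.log lam1 := by
  obtain ⟨i, rfl⟩ := hlam1.1
  have hcard : (n : ℝ) - κ = #{i | G.adjMatrix_isHermitian.eigenvalues i ≠ 0} := by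
    have h : ((G.nullity + #{i | G.adjMatrix_isHermitian.eigenvalues i ≠ 0} : ℕ) : ℝ) = n :=
      congrArg Nat.cast G.nullity_add_card_nonzero_eigenvalues
    rw [hκ, ← h, Nat.cast_add]
    ring
  have := Real.add_card_nonzero_add_log_abs_prod_sub_log_le_sum_abs
    G.adjMatrix_isHermitian.eigenvalues i
  rw [SimpleGraph.energy, SimpleGraph.prodNonzeroEig]
  linarith

theorem graph_energy_lower_bound_das_mojallal_gutman {n : ℕ}
    (G : SimpleGraph (Fin n)) [DecidableRel G.Adj]
    (hedge : ∃ u v, G.Adj u v)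
    (lam1 : ℝ) (hlam1 : IsGreatest (Set.range (G.adjMatrix_isHermitian).eigenvalues) lam1)
    (κ : ℕ) (hκ : κ = G.nullity) :
    G.energy ≥
      lam1 + ((n : ℝ) - κ - 1) + Real.log |G.prodNonzeroEig| - Real.log lam1 :=
  graph_energy_lower_bound_das_mojallal_gutman_general G lam1 hlam1 κ hκ
end

section
/- Let R be an n×n real symmetric matrix with nonnegative entries and nullity κ = η(R), and suppose there exists a nonzero vector x with nonnegative entries such that μ := (xᵀRx)/(xᵀx) ≥ 1. Then E(R) ≥ μ + (n − κ − 1) + ln|Υ_{n−κ}(R)| − ln μ. -/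
open Finset

/-!
Diagonalising `R`, the Rayleigh quotient `μ` is a convex combination of the eigenvalues, so the
largest eigenvalue `λ₁` satisfies `1 ≤ μ ≤ λ₁`. Every other nonzero eigenvalue `λ` contributes
`|λ| ≥ 1 + ln |λ|`, and summing these `n - κ - 1` bounds gives
`E(R) ≥ λ₁ + (n - κ - 1) + ln |Υ_{n-κ}(R)| - ln λ₁`. Finally `t ↦ t - ln t` is increasing on
`[1, ∞)`, so `λ₁` may be replaced by `μ`.
-/

open scoped Matrix

lemma Matrix.dotProduct_transpose_mulVec_mulVec {ι R : Type*} [Fintype ι] [CommSemiring R]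
    (M B : Matrix ι ι R) (x : ι → R) :
    (Mᵀ *ᵥ x) ⬝ᵥ (B *ᵥ (Mᵀ *ᵥ x)) = x ⬝ᵥ ((M * B * Mᵀ) *ᵥ x) := by
  rw [← mulVec_mulVec, ← mulVec_mulVec, dotProduct_mulVec x M, ← mulVec_transpose]

lemma Matrix.dotProduct_self_pos {ι : Type*} [Fintype ι] {x : ι → ℝ} (hx : x ≠ 0) :
    0 < x ⬝ᵥ x := by
  simpa using dotProduct_self_star_pos_iff.2 hx

namespace Matrix.IsHermitian

variable {ι : Type*} [Fintype ι] [DecidableEq ι] {A : Matrix ι ι ℝ} (hA : A.IsHermitian)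

lemma eigenvectorUnitary_mul_transpose :
    (hA.eigenvectorUnitary : Matrix ι ι ℝ) * (hA.eigenvectorUnitary : Matrix ι ι ℝ)ᵀ = 1 := by
  rw [← conjTranspose_eq_transpose_of_trivial, ← star_eq_conjTranspose,
    Unitary.mul_star_self_of_mem hA.eigenvectorUnitary.2]

lemma transpose_eigenvectorUnitary_mul_mul :
    (hA.eigenvectorUnitary : Matrix ι ι ℝ)ᵀ * A * hA.eigenvectorUnitary =
      diagonal hA.eigenvalues := by
  simpa [star_eq_conjTranspose] using hA.conjStarAlgAut_star_eigenvectorUnitary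

lemma dotProduct_self_eq_sum_sq (x : ι → ℝ) :
    x ⬝ᵥ x = ∑ i, (((hA.eigenvectorUnitary : Matrix ι ι ℝ)ᵀ *ᵥ x) i) ^ 2 := by
  set U : Matrix ι ι ℝ := ↑hA.eigenvectorUnitary
  calc x ⬝ᵥ x = x ⬝ᵥ ((U * 1 * Uᵀ) *ᵥ x) := by
        rw [Matrix.mul_one, hA.eigenvectorUnitary_mul_transpose, one_mulVec]
    _ = _ := by
      rw [← dotProduct_transpose_mulVec_mulVec, one_mulVec]
      simp only [dotProduct, sq]

lemma dotProduct_mulVec_eq_sum_eigenvalues_mul_sq (x : ι → ℝ) :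
    x ⬝ᵥ (A *ᵥ x) =
      ∑ i, hA.eigenvalues i * (((hA.eigenvectorUnitary : Matrix ι ι ℝ)ᵀ *ᵥ x) i) ^ 2 := by
  set U : Matrix ι ι ℝ := ↑hA.eigenvectorUnitary
  calc x ⬝ᵥ (A *ᵥ x) = x ⬝ᵥ ((U * (Uᵀ * A * U) * Uᵀ) *ᵥ x) := by
        rw [show U * (Uᵀ * A * U) * Uᵀ = U * Uᵀ * A * (U * Uᵀ) by simp only [Matrix.mul_assoc],
          hA.eigenvectorUnitary_mul_transpose, Matrix.one_mul, Matrix.mul_one]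
    _ = _ := by
      rw [← dotProduct_transpose_mulVec_mulVec, hA.transpose_eigenvectorUnitary_mul_mul]
      simp only [dotProduct, mulVec_diagonal]
      exact sum_congr rfl fun i _ => by ring

lemma dotProduct_mulVec_le_mul_dotProduct_self {c : ℝ} (hc : ∀ i, hA.eigenvalues i ≤ c)
    (x : ι → ℝ) : x ⬝ᵥ (A *ᵥ x) ≤ c * (x ⬝ᵥ x) := by
  rw [hA.dotProduct_mulVec_eq_sum_eigenvalues_mul_sq, hA.dotProduct_self_eq_sum_sq, mul_sum]
  exact sum_le_sum fun i _ => mul_le_mul_of_nonneg_right (hc i) (sq_nonneg _)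

lemma exists_rayleigh_le_eigenvalues {x : ι → ℝ} (hx : x ≠ 0) :
    ∃ i, (x ⬝ᵥ (A *ᵥ x)) / (x ⬝ᵥ x) ≤ hA.eigenvalues i := by
  obtain ⟨j, -⟩ := Function.ne_iff.1 hx
  have : Nonempty ι := ⟨j⟩
  obtain ⟨i, hi⟩ := Finite.exists_max hA.eigenvalues
  exact ⟨i, (div_le_iff₀ (dotProduct_self_pos hx)).2
    (hA.dotProduct_mulVec_le_mul_dotProduct_self hi x)⟩

end Matrix.IsHermitian

lemma Real.sub_log_le_sub_log {a b : ℝ} (ha : 1 ≤ a) (hab : a ≤ b) :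
    a - Real.log a ≤ b - Real.log b := by
  have ha0 : 0 < a := by linarith
  have hb0 : 0 < b := by linarith
  have hlog : Real.log (b / a) ≤ b / a - 1 := Real.log_le_sub_one_of_pos (by positivity)
  rw [Real.log_div hb0.ne' ha0.ne'] at hlog
  have : b / a - 1 ≤ b - a := by
    rw [div_sub_one ha0.ne', div_le_iff₀ ha0]
    nlinarith
  linarith

lemma Real.add_one_log_abs_le_abs {t : ℝ} (ht : t ≠ 0) : 1 + Real.log |t| ≤ |t| := by
  linarith [Real.log_le_sub_one_of_pos (abs_pos.2 ht)]

lemma Finset.abs_add_card_add_log_abs_prod_le_sum_abs {ι : Type*} [Fintype ι] [DecidableEq ι]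
    (f : ι → ℝ) {j : ι} (hj : f j ≠ 0) :
    |f j| + (#{i | f i ≠ 0} - 1 : ℝ) + Real.log |∏ i ∈ {i | f i ≠ 0}, f i| - Real.log |f j| ≤
      ∑ i, |f i| := by
  set S : Finset ι := {i | f i ≠ 0}
  have hjS : j ∈ S := mem_filter.2 ⟨mem_univ j, hj⟩
  have hlog : Real.log |∏ i ∈ S, f i| = ∑ i ∈ S, Real.log |f i| := by
    rw [abs_prod, Real.log_prod fun i hi => abs_ne_zero.2 (mem_filter.1 hi).2]
  have htail : ∑ i ∈ S.erase j, (1 + Real.log |f i|) ≤ ∑ i ∈ S.erase j, |f i| :=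
    sum_le_sum fun i hi => Real.add_one_log_abs_le_abs (mem_filter.1 (mem_of_mem_erase hi)).2
  rw [sum_add_distrib, sum_const, card_erase_of_mem hjS, nsmul_one,
    Nat.cast_sub (card_pos.2 ⟨j, hjS⟩), sum_erase_eq_sub hjS, Nat.cast_one] at htail
  have hsum : ∑ i, |f i| = ∑ i ∈ S, |f i| :=
    (sum_filter_of_ne fun i _ h => abs_ne_zero.1 h).symm
  rw [hsum, ← add_sum_erase S _ hjS, hlog]
  linarith

lemma Matrix.IsHermitian.card_eigenvalues_ne_zero {n : ℕ} {R : Matrix (Fin n) (Fin n) ℝ}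
    (hR : R.IsHermitian) :
    (#{i | hR.eigenvalues i ≠ 0} : ℝ) = n - R.nullityEig hR := by
  have h := card_filter_add_card_filter_not (s := univ) (fun i => hR.eigenvalues i = 0)
  rw [card_univ, Fintype.card_fin] at h
  rw [nullityEig, eq_sub_iff_add_eq, ← Nat.cast_add, add_comm, h]

open scoped Matrix in
theorem energy_lower_bound_rayleigh_general {n : ℕ}
    (R : Matrix (Fin n) (Fin n) ℝ) (hR : R.IsHermitian)
    (κ : ℕ) (hκ : κ = R.nullityEig hR)
    (x : Fin n → ℝ) (hx0 : x ≠ 0)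
    (μ : ℝ) (hμdef : μ = (x ⬝ᵥ (R *ᵥ x)) / (x ⬝ᵥ x)) (hμ : 1 ≤ μ) :
    R.energy hR ≥
      μ + ((n : ℝ) - κ - 1) + Real.log |R.prodNonzeroEig hR| - Real.log μ := by
  obtain ⟨i, hμi⟩ := hR.exists_rayleigh_le_eigenvalues hx0
  rw [← hμdef] at hμi
  have hi : 0 < hR.eigenvalues i := by linarith
  have hsum := abs_add_card_add_log_abs_prod_le_sum_abs hR.eigenvalues hi.ne'
  rw [abs_of_pos hi, hR.card_eigenvalues_ne_zero, ← hκ] at hsum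
  have hmono := Real.sub_log_le_sub_log hμ hμi
  rw [ge_iff_le, Matrix.energy, Matrix.prodNonzeroEig]
  linarith

open scoped Matrix in
theorem energy_lower_bound_rayleigh {n : ℕ}
    (R : Matrix (Fin n) (Fin n) ℝ) (hR : R.IsHermitian)
    (hnonneg : ∀ i j, 0 ≤ R i j)
    (κ : ℕ) (hκ : κ = R.nullityEig hR)
    (x : Fin n → ℝ) (hx0 : x ≠ 0) (hxnn : ∀ i, 0 ≤ x i)
    (μ : ℝ) (hμdef : μ = (x ⬝ᵥ (R *ᵥ x)) / (x ⬝ᵥ x)) (hμ : 1 ≤ μ) :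
    R.energy hR ≥
      μ + ((n : ℝ) - κ - 1) + Real.log |R.prodNonzeroEig hR| - Real.log μ :=
  energy_lower_bound_rayleigh_general R hR κ hκ x hx0 μ hμdef hμ
end

section
/- Let G be a finite simple graph with n vertices and nullity κ = η(G), and suppose some connected component of G, with at least 2 vertices, induces a subgraph G₁ that is r₁-regular (so r₁ ≥ 1). Then E(G) ≥ r₁ + (n − κ − 1) + ln|Υ_{n−κ}(G)| − ln r₁. -/
/-!
The indicator vector of the `r₁`-regular component is an eigenvector of `A(G)` with
eigenvalue `r₁`. Every other nonzero eigenvalue `λ` satisfies `|λ| ≥ 1 + ln |λ|`; summing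
this over the `n - κ - 1` remaining nonzero eigenvalues and using
`ln |Υ| = ln r₁ + ∑ ln |λ|` gives the bound.
-/

open Finset

/-- Adjacency in an induced subgraph is decidable. -/
instance instDecidableRelInduceAdj {n : ℕ} (G : SimpleGraph (Fin n))
    [h : DecidableRel G.Adj] (s : Set (Fin n)) :
    DecidableRel (SimpleGraph.induce s G).Adj :=
  fun a b => h a b

open scoped Matrix

theorem Finset.card_add_log_abs_prod_le_sum_abs {ι : Type*} (s : Finset ι) (f : ι → ℝ)
    (hf : ∀ i ∈ s, f i ≠ 0) :
    (#s : ℝ) + Real.log |∏ i ∈ s, f i| ≤ ∑ i ∈ s, |f i| := by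
  rw [abs_prod, Real.log_prod fun i hi => abs_ne_zero.mpr (hf i hi), card_eq_sum_ones,
    Nat.cast_sum, Nat.cast_one, ← sum_add_distrib]
  refine sum_le_sum fun i hi => ?_
  linarith [Real.log_le_sub_one_of_pos (abs_pos.mpr (hf i hi))]

theorem Matrix.IsHermitian.exists_eigenvalues_eq_of_mulVec_eq_smul {𝕜 n : Type*}
    [RCLike 𝕜] [Fintype n] [DecidableEq n] {A : Matrix n n 𝕜} (hA : A.IsHermitian) {μ : ℝ}
    {v : n → 𝕜} (hv : v ≠ 0) (hAv : A *ᵥ v = (μ : 𝕜) • v) : ∃ i, hA.eigenvalues i = μ := by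
  have hμ : Module.End.HasEigenvalue (Matrix.toLin' A) (μ : 𝕜) :=
    Module.End.hasEigenvalue_of_hasEigenvector
      ⟨Module.End.mem_eigenspace_iff.mpr hAv, hv⟩
  have hspec := hμ.mem_spectrum
  rw [Matrix.spectrum_toLin', hA.spectrum_eq_image_range] at hspec
  obtain ⟨_, ⟨i, rfl⟩, hi⟩ := hspec
  exact ⟨i, RCLike.ofReal_injective hi⟩

namespace SimpleGraph

theorem adjMatrix_mulVec_indicator_of_isRegularOfDegree {V α : Type*} [Fintype V]
    [NonAssocSemiring α] {G : SimpleGraph V} [DecidableRel G.Adj] {s : Set V}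
    (hs : ∀ ⦃u v⦄, u ∈ s → G.Adj u v → v ∈ s) [(G.induce s).LocallyFinite] {r : ℕ}
    (hreg : (G.induce s).IsRegularOfDegree r) :
    G.adjMatrix α *ᵥ s.indicator 1 = (r : α) • s.indicator 1 := by
  ext v
  rw [adjMatrix_mulVec_apply, Pi.smul_apply]
  by_cases hv : v ∈ s
  · have hnbr : G.neighborSet v ⊆ s := fun _ huv => hs hv huv
    have hdeg : G.degree v = r := by
      rw [← hreg.degree_eq ⟨v, hv⟩]
      classical
      convert (degree_induce_of_neighborSet_subset (v := ⟨v, hv⟩) hnbr).symm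
    rw [sum_congr rfl fun u hu =>
        Set.indicator_of_mem (hnbr ((mem_neighborFinset _ _ _).mp hu)) _,
      Set.indicator_of_mem hv]
    simp [hdeg]
  · rw [sum_eq_zero fun u hu => Set.indicator_of_notMem
      (fun hu' => hv (hs hu' ((mem_neighborFinset _ _ _).mp hu).symm)) _,
      Set.indicator_of_notMem hv, smul_zero]

variable {n : ℕ} (G : SimpleGraph (Fin n)) [DecidableRel G.Adj]

theorem card_nonzero_eigenvalues :
    (#{i | G.adjMatrix_isHermitian.eigenvalues i ≠ 0} : ℝ) = n - G.nullity := by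
  have h := card_filter_add_card_filter_not (s := (univ : Finset (Fin n)))
    (fun i => G.adjMatrix_isHermitian.eigenvalues i ≠ 0)
  simp only [card_univ, Fintype.card_fin, not_not] at h
  rw [nullity, eq_sub_iff_add_eq]
  exact_mod_cast h

theorem energy_ge_of_eigenvalue_ne_zero (i : Fin n)
    (hi : G.adjMatrix_isHermitian.eigenvalues i ≠ 0) :
    |G.adjMatrix_isHermitian.eigenvalues i| + ((n : ℝ) - G.nullity - 1) +
      Real.log |G.prodNonzeroEig| - Real.log |G.adjMatrix_isHermitian.eigenvalues i| ≤
      G.energy := by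
  set eig := G.adjMatrix_isHermitian.eigenvalues
  set T : Finset (Fin n) := {j | eig j ≠ 0}
  have hiT : i ∈ T := mem_filter.mpr ⟨mem_univ _, hi⟩
  have hrest_ne : ∀ j ∈ T.erase i, eig j ≠ 0 := fun _ hj =>
    (mem_filter.mp (mem_of_mem_erase hj)).2
  have hrest := (T.erase i).card_add_log_abs_prod_le_sum_abs eig hrest_ne
  have hcard : (#(T.erase i) : ℝ) = n - G.nullity - 1 := by
    rw [card_erase_of_mem hiT, Nat.cast_sub (card_pos.mpr ⟨i, hiT⟩), card_nonzero_eigenvalues,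
      Nat.cast_one]
  have hlog : Real.log |G.prodNonzeroEig| =
      Real.log |eig i| + Real.log |∏ j ∈ T.erase i, eig j| := by
    rw [prodNonzeroEig, ← mul_prod_erase T _ hiT, abs_mul, Real.log_mul (abs_ne_zero.mpr hi)
      (abs_ne_zero.mpr (prod_ne_zero_iff.mpr hrest_ne))]
  have hsum : ∑ j ∈ T, |eig j| ≤ G.energy :=
    sum_le_sum_of_subset_of_nonneg T.subset_univ fun _ _ _ => abs_nonneg _
  rw [← add_sum_erase T _ hiT] at hsum
  linarith

end SimpleGraph

theorem graph_energy_lower_bound_regular_component_general {n : ℕ}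
    (G : SimpleGraph (Fin n)) [DecidableRel G.Adj]
    (κ : ℕ) (hκ : κ = G.nullity)
    (s : Finset (Fin n))
    (hcomp : ∃ c : G.ConnectedComponent, (↑s : Set (Fin n)) = c.supp)
    (r₁ : ℕ) (hr₁ : 1 ≤ r₁)
    (hreg : (SimpleGraph.induce (↑s : Set (Fin n)) G).IsRegularOfDegree r₁) :
    G.energy ≥
      (r₁ : ℝ) + ((n : ℝ) - κ - 1) +
        Real.log |G.prodNonzeroEig| - Real.log (r₁ : ℝ) := by
  obtain ⟨c, hc⟩ := hcomp
  have hclosed : ∀ ⦃u v⦄, u ∈ (s : Set (Fin n)) → G.Adj u v → v ∈ (s : Set (Fin n)) :=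
    fun _ _ hu huv => hc ▸ c.mem_supp_of_adj_mem_supp (hc ▸ hu) huv
  have hind : (s : Set (Fin n)).indicator (1 : Fin n → ℝ) ≠ 0 := by
    obtain ⟨v, hv⟩ := hc ▸ c.nonempty_supp
    exact fun h => by simpa [Set.indicator_of_mem hv] using congrFun h v
  obtain ⟨i, hi⟩ := G.adjMatrix_isHermitian.exists_eigenvalues_eq_of_mulVec_eq_smul (μ := r₁)
    hind (SimpleGraph.adjMatrix_mulVec_indicator_of_isRegularOfDegree hclosed hreg)
  have hr₁pos : (0 : ℝ) < r₁ := by exact_mod_cast hr₁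
  have hbound := G.energy_ge_of_eigenvalue_ne_zero i (hi ▸ hr₁pos.ne')
  rw [hi, abs_of_pos hr₁pos, ← hκ] at hbound
  exact hbound

theorem graph_energy_lower_bound_regular_component {n : ℕ}
    (G : SimpleGraph (Fin n)) [DecidableRel G.Adj]
    (κ : ℕ) (hκ : κ = G.nullity)
    (s : Finset (Fin n))
    (hcomp : ∃ c : G.ConnectedComponent, (↑s : Set (Fin n)) = c.supp)
    (hcard : 2 ≤ s.card)
    (r₁ : ℕ) (hr₁ : 1 ≤ r₁)
    (hreg : (SimpleGraph.induce (↑s : Set (Fin n)) G).IsRegularOfDegree r₁) :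
    G.energy ≥
      (r₁ : ℝ) + ((n : ℝ) - κ - 1) +
        Real.log |G.prodNonzeroEig| - Real.log (r₁ : ℝ) :=
  graph_energy_lower_bound_regular_component_general G κ hκ s hcomp r₁ hr₁ hreg
end

section
/- Let G be a finite simple graph with n vertices and nullity κ = η(G), and let G₁ be the subgraph induced on a connected component of G having n₁ ≥ 2 vertices, with adjacency matrix A₁. For each integer k ≥ 0 define γ₁^(k) = sqrt( ‖A₁^{k+1} e‖² / ‖A₁^{k} e‖² ), where e is the all-ones vector of length n₁ and ‖·‖ is the Euclidean norm. Then for every k ≥ 0, E(G) ≥ γ₁^(k) + (n − κ − 1) + ln|Υ_{n−κ}(G)| − ln γ₁^(k). -/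
/-!
Let `μ` be the largest eigenvalue of `G`. As `A(G)` is entrywise nonnegative, comparing the
Rayleigh quotients of an eigenvector `v` and of `|v|` shows `|λᵢ| ≤ μ` for every eigenvalue.
A connected component is closed under adjacency, so extending vectors by zero intertwines `A₁`
with `A(G)`; hence `‖A₁ y‖ ≤ μ ‖y‖` and `γ₁^(k) ≤ μ`. Every vertex of the component has a
neighbour, so `‖A₁ y‖² ≥ ∑ᵥ deg v · yᵥ² ≥ ‖y‖²` for `y ≥ 0`, giving `γ₁^(k) ≥ 1`.
Finally `x - 1 - ln x ≥ 0` for `x > 0`, applied to the nonzero `|λᵢ|` other than `μ`, gives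
`E(G) ≥ μ - ln μ + (n - κ - 1) + ln |Υ_{n-κ}(G)|`, and `x - ln x` is increasing on `[1, ∞)`.
-/

open Finset

open Matrix

theorem Matrix.abs_dotProduct_mulVec_le {ι : Type*} [Fintype ι] {A : Matrix ι ι ℝ}
    (hA : ∀ i j, 0 ≤ A i j) (x : ι → ℝ) : |x ⬝ᵥ (A *ᵥ x)| ≤ |x| ⬝ᵥ (A *ᵥ |x|) := by
  simp only [dotProduct, mulVec, Pi.abs_apply]
  refine (abs_sum_le_sum_abs _ _).trans (sum_le_sum fun i _ => ?_)
  rw [abs_mul]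
  refine mul_le_mul_of_nonneg_left ((abs_sum_le_sum_abs _ _).trans_eq ?_) (abs_nonneg _)
  exact sum_congr rfl fun j _ => by rw [abs_mul, abs_of_nonneg (hA i j)]

namespace Matrix.IsHermitian

variable {ι : Type*} [Fintype ι] [DecidableEq ι] {A : Matrix ι ι ℝ} (hA : A.IsHermitian)

theorem dotProduct_eq_sum_eigenvectorBasis (x y : ι → ℝ) :
    x ⬝ᵥ y = ∑ i, (⇑(hA.eigenvectorBasis i) ⬝ᵥ x) * (⇑(hA.eigenvectorBasis i) ⬝ᵥ y) := by
  have := hA.eigenvectorBasis.sum_inner_mul_inner (WithLp.toLp 2 x) (WithLp.toLp 2 y)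
  simp only [EuclideanSpace.inner_eq_star_dotProduct] at this
  simpa [dotProduct_comm] using this.symm

theorem eigenvectorBasis_dotProduct_mulVec (i : ι) (x : ι → ℝ) :
    ⇑(hA.eigenvectorBasis i) ⬝ᵥ (A *ᵥ x) = hA.eigenvalues i * (⇑(hA.eigenvectorBasis i) ⬝ᵥ x) := by
  rw [dotProduct_mulVec, ← mulVec_transpose, ← conjTranspose_eq_transpose_of_trivial, hA.eq,
    mulVec_eigenvectorBasis, smul_dotProduct, smul_eq_mul]

theorem dotProduct_mulVec_eq_sum (x y : ι → ℝ) :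
    x ⬝ᵥ (A *ᵥ y) = ∑ i, hA.eigenvalues i *
      ((⇑(hA.eigenvectorBasis i) ⬝ᵥ x) * (⇑(hA.eigenvectorBasis i) ⬝ᵥ y)) := by
  simp only [hA.dotProduct_eq_sum_eigenvectorBasis x, hA.eigenvectorBasis_dotProduct_mulVec]
  exact sum_congr rfl fun i _ => by ring

theorem eigenvectorBasis_dotProduct_self (i : ι) :
    ⇑(hA.eigenvectorBasis i) ⬝ᵥ ⇑(hA.eigenvectorBasis i) = 1 := by
  have := hA.eigenvectorBasis.inner_eq_one i
  rwa [EuclideanSpace.inner_eq_star_dotProduct, star_trivial] at this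

theorem dotProduct_mulVec_le {μ : ℝ} (hμ : ∀ i, hA.eigenvalues i ≤ μ) (x : ι → ℝ) :
    x ⬝ᵥ (A *ᵥ x) ≤ μ * (x ⬝ᵥ x) := by
  rw [hA.dotProduct_mulVec_eq_sum, hA.dotProduct_eq_sum_eigenvectorBasis x x, mul_sum]
  exact sum_le_sum fun i _ => mul_le_mul_of_nonneg_right (hμ i) (mul_self_nonneg _)

theorem mulVec_dotProduct_mulVec_le {μ : ℝ} (hμ : ∀ i, |hA.eigenvalues i| ≤ μ) (x : ι → ℝ) :
    (A *ᵥ x) ⬝ᵥ (A *ᵥ x) ≤ μ ^ 2 * (x ⬝ᵥ x) := by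
  rw [hA.dotProduct_mulVec_eq_sum, hA.dotProduct_eq_sum_eigenvectorBasis x x, mul_sum]
  refine sum_le_sum fun i _ => ?_
  rw [hA.eigenvectorBasis_dotProduct_mulVec]
  convert mul_le_mul_of_nonneg_right (sq_le_sq' (abs_le.mp (hμ i)).1 (abs_le.mp (hμ i)).2)
    (mul_self_nonneg (⇑(hA.eigenvectorBasis i) ⬝ᵥ x)) using 1
  ring

theorem abs_eigenvalues_le_of_nonneg (hA₀ : ∀ i j, 0 ≤ A i j) {i₀ : ι}
    (hi₀ : ∀ i, hA.eigenvalues i ≤ hA.eigenvalues i₀) (j : ι) :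
    |hA.eigenvalues j| ≤ hA.eigenvalues i₀ := by
  set v : ι → ℝ := ⇑(hA.eigenvectorBasis j)
  have hv : v ⬝ᵥ v = 1 := hA.eigenvectorBasis_dotProduct_self j
  have habs : |v| ⬝ᵥ |v| = 1 := by
    rw [← hv]; exact sum_congr rfl fun i _ => abs_mul_abs_self (v i)
  calc |hA.eigenvalues j| = |v ⬝ᵥ (A *ᵥ v)| := by
        rw [hA.eigenvectorBasis_dotProduct_mulVec, hv, mul_one]
    _ ≤ |v| ⬝ᵥ (A *ᵥ |v|) := abs_dotProduct_mulVec_le hA₀ v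
    _ ≤ hA.eigenvalues i₀ := by simpa [habs] using hA.dotProduct_mulVec_le hi₀ |v|

end Matrix.IsHermitian

theorem Matrix.extend_dotProduct_extend {ι κ : Type*} [Fintype ι] [Fintype κ] {f : ι → κ}
    (hf : f.Injective) (x y : ι → ℝ) :
    Function.extend f x 0 ⬝ᵥ Function.extend f y 0 = x ⬝ᵥ y := by
  refine (Fintype.sum_of_injective f hf _ _ (fun j hj => ?_) fun i => ?_).symm
  · simp [Function.extend_apply' _ _ _ fun ⟨i, hi⟩ => hj ⟨i, hi⟩]
  · simp [hf.extend_apply]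

namespace SimpleGraph

variable {V : Type*} [Fintype V] (G : SimpleGraph V) [DecidableRel G.Adj]

theorem sum_degree_mul_sq_le {x : V → ℝ} (hx : 0 ≤ x) :
    ∑ v, (G.degree v : ℝ) * x v ^ 2 ≤ (G.adjMatrix ℝ *ᵥ x) ⬝ᵥ (G.adjMatrix ℝ *ᵥ x) := by
  have hdeg : ∑ v, (G.adjMatrix ℝ *ᵥ (x ^ 2)) v = ∑ v, (G.degree v : ℝ) * x v ^ 2 := by
    rw [← one_dotProduct, dotProduct_mulVec, ← mulVec_transpose, transpose_adjMatrix]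
    exact sum_congr rfl fun v _ => by simp
  rw [← hdeg]
  simp only [dotProduct, adjMatrix_mulVec_apply, ← sq, Pi.pow_apply]
  exact sum_le_sum fun v _ => sum_sq_le_sq_sum_of_nonneg fun u _ => hx u

theorem dotProduct_self_le_adjMatrix_mulVec (hG : ∀ v, 0 < G.degree v) {x : V → ℝ} (hx : 0 ≤ x) :
    x ⬝ᵥ x ≤ (G.adjMatrix ℝ *ᵥ x) ⬝ᵥ (G.adjMatrix ℝ *ᵥ x) := by
  refine le_trans (sum_le_sum fun v _ => ?_) (G.sum_degree_mul_sq_le hx)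
  rw [← sq]
  exact le_mul_of_one_le_left (sq_nonneg _) (by exact_mod_cast hG v)

theorem adjMatrix_mulVec_nonneg {x : V → ℝ} (hx : 0 ≤ x) : 0 ≤ G.adjMatrix ℝ *ᵥ x :=
  fun v => by rw [adjMatrix_mulVec_apply]; exact sum_nonneg fun u _ => hx u

theorem adjMatrix_mulVec_extend {s : Set V} [Fintype s] [DecidableRel (G.induce s).Adj]
    (hs : ∀ a b, G.Adj a b → a ∈ s → b ∈ s) (y : s → ℝ) :
    G.adjMatrix ℝ *ᵥ Function.extend Subtype.val y 0 =
      Function.extend Subtype.val ((G.induce s).adjMatrix ℝ *ᵥ y) 0 := by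
  have hrange : ∀ {j}, j ∉ s → ¬∃ u : s, u.1 = j := fun hj ⟨u, hu⟩ => hj (hu ▸ u.2)
  ext i
  by_cases hi : i ∈ s
  · rw [show i = ((⟨i, hi⟩ : s) : V) from rfl, Subtype.val_injective.extend_apply]
    refine (Fintype.sum_of_injective Subtype.val Subtype.val_injective _ _ (fun j hj => ?_)
      fun u => ?_).symm
    · simp [Function.extend_apply' _ _ _ hj]
    · simp [adjMatrix_apply]
  · rw [Function.extend_apply' _ _ _ (hrange hi)]
    refine sum_eq_zero fun j _ => ?_
    by_cases hj : j ∈ s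
    · have hij : ¬G.Adj i j := fun h => hi (hs j i h.symm hj)
      simp [adjMatrix_apply, hij]
    · simp [Function.extend_apply' _ _ _ (hrange hj)]

variable [DecidableEq V]

theorem adjMatrix_pow_mulVec_nonneg (k : ℕ) {x : V → ℝ} (hx : 0 ≤ x) :
    0 ≤ G.adjMatrix ℝ ^ k *ᵥ x := by
  induction k with
  | zero => simpa using hx
  | succ k ih => rw [pow_succ', ← mulVec_mulVec]; exact G.adjMatrix_mulVec_nonneg ih

theorem card_le_adjMatrix_pow_mulVec_one (hG : ∀ v, 0 < G.degree v) (k : ℕ) :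
    (Fintype.card V : ℝ) ≤ (G.adjMatrix ℝ ^ k *ᵥ 1) ⬝ᵥ (G.adjMatrix ℝ ^ k *ᵥ 1) := by
  induction k with
  | zero => simp
  | succ k ih =>
    rw [pow_succ', ← mulVec_mulVec]
    exact ih.trans (G.dotProduct_self_le_adjMatrix_mulVec hG
      (G.adjMatrix_pow_mulVec_nonneg k zero_le_one))

theorem induce_adjMatrix_mulVec_dotProduct_le {s : Set V} [Fintype s]
    [DecidableRel (G.induce s).Adj] (hs : ∀ a b, G.Adj a b → a ∈ s → b ∈ s) {μ : ℝ}
    (hμ : ∀ i, |G.adjMatrix_isHermitian.eigenvalues i| ≤ μ) (y : s → ℝ) :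
    ((G.induce s).adjMatrix ℝ *ᵥ y) ⬝ᵥ ((G.induce s).adjMatrix ℝ *ᵥ y) ≤ μ ^ 2 * (y ⬝ᵥ y) := by
  simpa only [← extend_dotProduct_extend Subtype.val_injective, G.adjMatrix_mulVec_extend hs]
    using G.adjMatrix_isHermitian.mulVec_dotProduct_mulVec_le hμ (Function.extend Subtype.val y 0)

theorem sqrt_induce_walk_ratio_mem_Icc {s : Set V} [Fintype s] [Nonempty s]
    [DecidableRel (G.induce s).Adj] (hs : ∀ a b, G.Adj a b → a ∈ s → b ∈ s)
    (hdeg : ∀ v, 0 < (G.induce s).degree v) {μ : ℝ}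
    (hμ : ∀ i, |G.adjMatrix_isHermitian.eigenvalues i| ≤ μ) (k : ℕ) :
    Real.sqrt ((∑ v, ((G.induce s).adjMatrix ℝ ^ (k + 1) *ᵥ fun _ => (1 : ℝ)) v ^ 2) /
      ∑ v, ((G.induce s).adjMatrix ℝ ^ k *ᵥ fun _ => (1 : ℝ)) v ^ 2) ∈ Set.Icc 1 μ := by
  set A₁ := (G.induce s).adjMatrix ℝ
  set x := A₁ ^ k *ᵥ fun _ => (1 : ℝ)
  have hx : 0 < x ⬝ᵥ x :=
    (Nat.cast_pos.mpr Fintype.card_pos).trans_le ((G.induce s).card_le_adjMatrix_pow_mulVec_one hdeg k)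
  have hμ₀ : 0 ≤ μ := (abs_nonneg _).trans (hμ (Classical.arbitrary s).1)
  have hratio : (∑ v, (A₁ ^ (k + 1) *ᵥ fun _ => (1 : ℝ)) v ^ 2) / ∑ v, x v ^ 2 =
      (A₁ *ᵥ x) ⬝ᵥ (A₁ *ᵥ x) / x ⬝ᵥ x := by
    rw [pow_succ', ← mulVec_mulVec]
    simp only [dotProduct, sq]
    rfl
  rw [hratio, Set.mem_Icc, Real.one_le_sqrt, one_le_div hx, Real.sqrt_le_left hμ₀, div_le_iff₀ hx]
  exact ⟨(G.induce s).dotProduct_self_le_adjMatrix_mulVec hdeg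
      ((G.induce s).adjMatrix_pow_mulVec_nonneg k zero_le_one),
    G.induce_adjMatrix_mulVec_dotProduct_le hs hμ x⟩

end SimpleGraph

theorem Real.sub_log_le_sub_log_s16 {x y : ℝ} (hy : 1 ≤ y) (hxy : y ≤ x) :
    y - Real.log y ≤ x - Real.log x := by
  have hy₀ : 0 < y := one_pos.trans_le hy
  have hlog : Real.log x - Real.log y ≤ x / y - 1 := by
    rw [← Real.log_div (hy₀.trans_le hxy).ne' hy₀.ne']
    exact Real.log_le_sub_one_of_pos (div_pos (hy₀.trans_le hxy) hy₀)
  have hdiv : x / y - 1 ≤ x - y := by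
    rw [div_sub_one hy₀.ne']
    exact div_le_self (sub_nonneg.mpr hxy) hy
  linarith

theorem abs_sub_log_add_card_add_log_prod_le_sum_abs {ι : Type*} [Fintype ι] (ev : ι → ℝ)
    {i₀ : ι} (hi₀ : ev i₀ ≠ 0) :
    |ev i₀| - Real.log |ev i₀| + ((Fintype.card ι : ℝ) - #{i | ev i = 0} - 1) +
      Real.log |∏ i with ev i ≠ 0, ev i| ≤ ∑ i, |ev i| := by
  set T := univ.filter fun i => ev i ≠ 0
  have hsum : ∑ i ∈ T, |ev i| = ∑ i, |ev i| := sum_filter_of_ne fun i _ h => abs_ne_zero.mp h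
  have hlog : Real.log |∏ i ∈ T, ev i| = ∑ i ∈ T, Real.log |ev i| := by
    rw [abs_prod, Real.log_prod fun i hi => abs_ne_zero.mpr (mem_filter.mp hi).2]
  have hcard : (Fintype.card ι : ℝ) - #{i | ev i = 0} = ∑ i ∈ T, (1 : ℝ) := by
    rw [sum_const, nsmul_one, ← card_univ, ← card_filter_add_card_filter_not (fun i => ev i = 0)]
    push_cast
    ring
  -- `x - 1 - log x ≥ 0`, so the whole sum dominates its `i₀` term
  have key : |ev i₀| - 1 - Real.log |ev i₀| ≤ ∑ i ∈ T, (|ev i| - 1 - Real.log |ev i|) :=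
    single_le_sum (f := fun i => |ev i| - 1 - Real.log |ev i|)
      (fun i hi => by linarith [Real.log_le_sub_one_of_pos (abs_pos.mpr (mem_filter.mp hi).2)])
      (mem_filter.mpr ⟨mem_univ i₀, hi₀⟩)
  rw [sum_sub_distrib, sum_sub_distrib] at key
  linarith

open scoped Matrix in
theorem graph_energy_lower_bound_walk_sequence {n : ℕ}
    (G : SimpleGraph (Fin n)) [DecidableRel G.Adj]
    (κ : ℕ) (hκ : κ = G.nullity)
    (s : Finset (Fin n))
    (hcomp : ∃ c : G.ConnectedComponent, (↑s : Set (Fin n)) = c.supp)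
    (hcard : 2 ≤ s.card)
    (A₁ : Matrix ↥(↑s : Set (Fin n)) ↥(↑s : Set (Fin n)) ℝ)
    (hA₁ : A₁ = (SimpleGraph.induce (↑s : Set (Fin n)) G).adjMatrix ℝ)
    (γ₁ : ℕ → ℝ)
    (hγ₁ : ∀ k, γ₁ k =
      Real.sqrt ((∑ v, ((A₁ ^ (k + 1)) *ᵥ (fun _ => (1 : ℝ))) v ^ 2) /
        (∑ v, ((A₁ ^ k) *ᵥ (fun _ => (1 : ℝ))) v ^ 2))) :
    ∀ k : ℕ,
      G.energy ≥
        γ₁ k + ((n : ℝ) - κ - 1) +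
          Real.log |G.prodNonzeroEig| - Real.log (γ₁ k) := by
  intro k
  obtain ⟨c, hc⟩ := hcomp
  subst hκ hA₁
  have hclosed : ∀ a b, G.Adj a b → a ∈ (↑s : Set (Fin n)) → b ∈ (↑s : Set (Fin n)) := by
    rw [hc]; exact fun a b hab ha => c.mem_supp_of_adj_mem_supp ha hab
  have : Nontrivial (↑s : Set (Fin n)) :=
    Set.nontrivial_coe_sort.mpr (Finset.one_lt_card_iff_nontrivial.mp hcard)
  have hdeg : ∀ v, 0 < (G.induce (↑s : Set (Fin n))).degree v := by
    have hconn : (G.induce (↑s : Set (Fin n))).Connected := by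
      rw [hc]; exact c.connected_toSimpleGraph
    exact fun v => hconn.preconnected.degree_pos_of_nontrivial v
  have hB := G.adjMatrix_isHermitian
  have : Nonempty (Fin n) := ⟨(Classical.arbitrary (↑s : Set (Fin n))).1⟩
  obtain ⟨i₀, hi₀⟩ := Finite.exists_max hB.eigenvalues
  set μ := hB.eigenvalues i₀
  have hμ : ∀ j, |hB.eigenvalues j| ≤ μ := hB.abs_eigenvalues_le_of_nonneg
    (fun i j => by rw [SimpleGraph.adjMatrix_apply]; positivity) hi₀
  obtain ⟨hγ1, hγμ⟩ := G.sqrt_induce_walk_ratio_mem_Icc hclosed hdeg hμ k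
  rw [← hγ₁] at hγ1 hγμ
  have hE := abs_sub_log_add_card_add_log_prod_le_sum_abs hB.eigenvalues
    (i₀ := i₀) (by linarith : μ ≠ 0)
  rw [Fintype.card_fin, abs_of_pos (by linarith : 0 < μ)] at hE
  have := Real.sub_log_le_sub_log_s16 hγ1 hγμ
  unfold SimpleGraph.energy SimpleGraph.nullity SimpleGraph.prodNonzeroEig
  linarith
end
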